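/- arXiv:1810.08283 — 3 statements merged into one kernel-verified Lean document; each statement's English description precedes it below -/
import Mathlib

section
/- Let M ≥ 2 and k > 0. Suppose q₁, q₂ ∈ L¹(ℝ^M) are such that their Fourier transforms 𝔉(qⱼ)(ξ) := ∫_{ℝ^M} qⱼ(z) e^{i ξ·z} dz vanish for all ξ with |ξ| > 2k. If 𝔉(q₁)(k(d_x − d_y)) = 𝔉(q₂)(k(d_x − d_y)) for all d_x, d_y ∈ S^{M−1}, then q₁ = q₂ almost everywhere. -/
open MeasureTheory

/-- The Fourier transform `𝔉(q)(ξ) = ∫ q(z) e^{i ξ·z} dz` on `ℝ^M`. -/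
noncomputable def fourierInt {M : ℕ} (q : EuclideanSpace ℝ (Fin M) → ℂ)
    (ξ : EuclideanSpace ℝ (Fin M)) : ℂ :=
  ∫ z, q z * Complex.exp (Complex.I * ((inner ℝ ξ z : ℝ) : ℂ))

open scoped FourierTransform RealInnerProductSpace

/-! Outside the ball of radius `2k` both Fourier transforms vanish, and inside it every frequency
has the form `k(d_x − d_y)`: in dimension at least 2, a vector `v` with `‖v‖ ≤ 2` is the difference
of the unit vectors `±v/2 + c w`, where `w` is a unit vector orthogonal to `v`. So the Fourier
transforms agree everywhere, and an integrable function is determined a.e. by its Fourier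
transform: every test function is the Fourier transform of a Schwartz function `ψ`, and
`∫ 𝓕ψ • f = ∫ ψ • 𝓕f`. -/

section Geometry

variable {V : Type*} [NormedAddCommGroup V] [InnerProductSpace ℝ V] [FiniteDimensional ℝ V]

lemma exists_norm_eq_one_inner_eq_zero (hV : 2 ≤ Module.finrank ℝ V) (v : V) :
    ∃ w : V, ‖w‖ = 1 ∧ ⟪v, w⟫ = 0 := by
  have hspan : Module.finrank ℝ (ℝ ∙ v) ≤ 1 := by
    simpa using finrank_span_le_card ({v} : Set V)
  have hsum := (ℝ ∙ v).finrank_add_finrank_orthogonal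
  have : Nontrivial (ℝ ∙ v)ᗮ := (Module.finrank_pos_iff (R := ℝ)).mp (by omega)
  obtain ⟨w, hw⟩ := exists_norm_eq (ℝ ∙ v)ᗮ zero_le_one
  exact ⟨w, hw, Submodule.inner_right_of_mem_orthogonal (Submodule.mem_span_singleton_self v) w.2⟩

lemma exists_norm_eq_one_sub_eq (hV : 2 ≤ Module.finrank ℝ V) {v : V} (hv : ‖v‖ ≤ 2) :
    ∃ x y : V, ‖x‖ = 1 ∧ ‖y‖ = 1 ∧ x - y = v := by
  obtain ⟨w, hw, hvw⟩ := exists_norm_eq_one_inner_eq_zero hV v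
  set c := √(1 - (‖v‖ / 2) ^ 2)
  have hc : c ^ 2 = 1 - (‖v‖ / 2) ^ 2 :=
    Real.sq_sqrt (by nlinarith [norm_nonneg v])
  have horth : ⟪(2⁻¹ : ℝ) • v, c • w⟫ = 0 := by
    rw [real_inner_smul_left, real_inner_smul_right, hvw, mul_zero, mul_zero]
  have hnorm : ‖(2⁻¹ : ℝ) • v‖ ^ 2 + ‖c • w‖ ^ 2 = 1 := by
    rw [norm_smul, norm_smul, hw, Real.norm_of_nonneg (by norm_num), mul_one, Real.norm_eq_abs,
      sq_abs, hc]
    ring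
  refine ⟨(2⁻¹ : ℝ) • v + c • w, c • w - (2⁻¹ : ℝ) • v, ?_, ?_, ?_⟩
  · rw [← pow_eq_one_iff_of_nonneg (norm_nonneg _) two_ne_zero, norm_add_sq_real, horth,
      mul_zero, add_zero, hnorm]
  · rw [← pow_eq_one_iff_of_nonneg (norm_nonneg _) two_ne_zero, norm_sub_sq_real, real_inner_comm,
      horth, mul_zero, sub_zero, add_comm, hnorm]
  · rw [show (2⁻¹ : ℝ) • v + c • w - (c • w - (2⁻¹ : ℝ) • v) = (2⁻¹ + 2⁻¹ : ℝ) • v by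
      rw [add_smul]; abel]
    norm_num

end Geometry

section Fourier

variable {V E : Type*} [NormedAddCommGroup V] [InnerProductSpace ℝ V] [FiniteDimensional ℝ V]
  [MeasurableSpace V] [BorelSpace V] [NormedAddCommGroup E] [NormedSpace ℂ E] [CompleteSpace E]

theorem Real.integral_fourier_smul_eq {f : V → ℂ} {g : V → E} (hf : Integrable f)
    (hg : Integrable g) : ∫ ξ, 𝓕 f ξ • g ξ = ∫ x, f x • 𝓕 g x := by
  have := VectorFourier.integral_fourierIntegral_smul_eq_flip (L := innerₗ V)
    Real.continuous_fourierChar continuous_inner hf hg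
  rwa [flip_innerₗ] at this

theorem MeasureTheory.Integrable.ae_eq_of_fourier_eq {f₁ f₂ : V → E} (hf₁ : Integrable f₁)
    (hf₂ : Integrable f₂) (h : 𝓕 f₁ = 𝓕 f₂) : f₁ =ᵐ[volume] f₂ := by
  refine ae_eq_of_integral_contDiff_smul_eq hf₁.locallyIntegrable hf₂.locallyIntegrable
    fun g g_smooth g_supp => ?_
  let φ : SchwartzMap V ℂ := (g_supp.comp_left Complex.ofReal_zero).toSchwartzMap
    (Complex.ofRealCLM.contDiff.comp g_smooth)
  let ψ : SchwartzMap V ℂ := 𝓕⁻ φ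
  have hφ : ⇑φ = 𝓕 ⇑ψ := by
    rw [← SchwartzMap.fourier_coe, FourierTransform.fourier_fourierInv_eq]
  have hpair : ∀ f : V → E, Integrable f → ∫ x, g x • f x = ∫ ξ, ψ ξ • 𝓕 f ξ := fun f hf => by
    rw [← Real.integral_fourier_smul_eq ψ.integrable hf, ← hφ]
    exact integral_congr_ae (.of_forall fun x => (Complex.coe_smul (g x) (f x)).symm)
  rw [hpair f₁ hf₁, hpair f₂ hf₂, h]

end Fourier

lemma fourier_eq_fourierInt {M : ℕ} (q : EuclideanSpace ℝ (Fin M) → ℂ)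
    (w : EuclideanSpace ℝ (Fin M)) : 𝓕 q w = fourierInt q ((-(2 * Real.pi)) • w) := by
  rw [Real.fourier_eq', fourierInt]
  congr 1 with v
  rw [smul_eq_mul, real_inner_smul_left, real_inner_comm w v, mul_comm]
  push_cast
  ring_nf

/-- If `q₁, q₂ ∈ L¹(ℝ^M)` are band-limited to the ball of radius `2k` and their Fourier
transforms agree on all frequencies `k(d_x − d_y)` with `d_x, d_y` on the unit sphere,
then `q₁ = q₂` almost everywhere. -/
theorem farField_uniqueness (M : ℕ) (hM : 2 ≤ M) (k : ℝ) (hk : 0 < k)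
    (q₁ q₂ : EuclideanSpace ℝ (Fin M) → ℂ)
    (hq₁ : Integrable q₁) (hq₂ : Integrable q₂)
    (hb₁ : ∀ ξ : EuclideanSpace ℝ (Fin M), 2 * k < ‖ξ‖ → fourierInt q₁ ξ = 0)
    (hb₂ : ∀ ξ : EuclideanSpace ℝ (Fin M), 2 * k < ‖ξ‖ → fourierInt q₂ ξ = 0)
    (heq : ∀ dx dy : EuclideanSpace ℝ (Fin M), ‖dx‖ = 1 → ‖dy‖ = 1 →
      fourierInt q₁ (k • (dx - dy)) = fourierInt q₂ (k • (dx - dy))) :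
    q₁ =ᵐ[volume] q₂ := by
  have hfourierInt_eq : ∀ ξ, fourierInt q₁ ξ = fourierInt q₂ ξ := by
    intro ξ
    rcases le_or_gt ‖ξ‖ (2 * k) with hξ | hξ
    · have hξ' : ‖k⁻¹ • ξ‖ ≤ 2 := by
        rw [norm_smul, norm_inv, Real.norm_of_nonneg hk.le, inv_mul_le_iff₀ hk]
        linarith
      obtain ⟨dx, dy, hdx, hdy, hdiff⟩ :=
        exists_norm_eq_one_sub_eq (by rwa [finrank_euclideanSpace_fin]) hξ'
      rw [← smul_inv_smul₀ hk.ne' ξ, ← hdiff]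
      exact heq dx dy hdx hdy
    · rw [hb₁ ξ hξ, hb₂ ξ hξ]
  refine hq₁.ae_eq_of_fourier_eq hq₂ (funext fun w => ?_)
  rw [fourier_eq_fourierInt, fourier_eq_fourierInt, hfourierInt_eq]
end

section
/- Let n ≥ 2 and let w₁, w₂ ∈ ℂⁿ be unit vectors such that the Hermitian inner product ⟨w₁, w₂⟩ := Σᵢ conj(w₁ᵢ) w₂ᵢ is a real number t. Let A := w₁ w₁ᵀ + w₂ w₂ᵀ. Then, counted with multiplicity, the eigenvalues of the Hermitian matrix AᴴA are (1 + |t|)², (1 − |t|)², and 0 with multiplicity n − 2; equivalently, the singular values of A are σ₀ = 1 + |Re⟨w₁, w₂⟩|, σ₁ = 1 − |Re⟨w₁, w₂⟩|, and σ₂ = σ₃ = ⋯ = 0. -/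
/-!
With `W` the `n × 2` matrix whose columns are `w₁, w₂`, we have `A = W Wᵀ`, hence
`Aᴴ A = (Wᵀ)ᴴ G Wᵀ` with `G = Wᴴ W` the Gram matrix of `w₁, w₂`. Moving the factor `Wᵀ`
to the front changes the characteristic polynomial only by `X ^ (n - 2)`, and
`Wᵀ (Wᵀ)ᴴ = Gᵀ`, so what remains is the characteristic polynomial of `Gᵀ G`.
Since `⟨w₁, w₂⟩ = t` is real, `G = !![1, t; t, 1]` is symmetric, and `G²` has eigenvalues
`(1 ± t)²`.
-/

open Polynomial Matrix

namespace Matrix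

variable {m ι R : Type*} [Fintype m] [DecidableEq m] [Fintype ι] [DecidableEq ι]

theorem charpoly_conjTranspose_mul_self_of_mul_transpose [CommRing R] [StarRing R]
    (W : Matrix m ι R) (h : Fintype.card ι ≤ Fintype.card m) :
    ((W * Wᵀ)ᴴ * (W * Wᵀ)).charpoly =
      X ^ (Fintype.card m - Fintype.card ι) * ((Wᴴ * W)ᵀ * (Wᴴ * W)).charpoly := by
  have hfactor : (W * Wᵀ)ᴴ * (W * Wᵀ) = (Wᵀᴴ * (Wᴴ * W)) * Wᵀ := by
    simp only [conjTranspose_mul, Matrix.mul_assoc]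
  rw [hfactor, charpoly_mul_comm_of_le _ _ h, ← Matrix.mul_assoc, transpose_mul,
    transpose_conjTranspose, conjTranspose_transpose]

theorem charpoly_of_fin_two_circulant [CommRing R] [Nontrivial R] (a b : R) :
    (!![a, b; b, a]).charpoly = (X - C (a + b)) * (X - C (a - b)) := by
  rw [charpoly_fin_two, trace_fin_two_of, det_fin_two_of]
  simp only [map_add, map_sub, map_mul]
  ring

theorem gram_pair_of_norm_eq_one {𝕜 E : Type*} [RCLike 𝕜] [NormedAddCommGroup E]
    [InnerProductSpace 𝕜 E] {x y : E} (hx : ‖x‖ = 1) (hy : ‖y‖ = 1) {t : ℝ}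
    (ht : inner 𝕜 x y = (t : 𝕜)) :
    gram 𝕜 ![x, y] = !![1, (t : 𝕜); (t : 𝕜), 1] := by
  have hyx : inner 𝕜 y x = (t : 𝕜) := by rw [← inner_conj_symm, ht, RCLike.conj_ofReal]
  ext i j
  fin_cases i <;> fin_cases j <;>
    simp [gram_apply, inner_self_eq_norm_sq_to_K, hx, hy, ht, hyx]

end Matrix

/-- For unit vectors `w₁, w₂ ∈ ℂⁿ` (`n ≥ 2`) whose Hermitian inner product is a real
number `t`, the eigenvalues of `Aᴴ A` with `A = w₁ w₁ᵀ + w₂ w₂ᵀ`, counted with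
multiplicity, are `(1 + |t|)²`, `(1 − |t|)²` and `0` (`n − 2` times); i.e. the singular
values of `A` are `1 + |t|`, `1 − |t|` and `0`. -/
theorem singular_values_two_scatterers (n : ℕ) (hn : 2 ≤ n)
    (w₁ w₂ : EuclideanSpace ℂ (Fin n)) (h1 : ‖w₁‖ = 1) (h2 : ‖w₂‖ = 1)
    (t : ℝ) (ht : (inner ℂ w₁ w₂ : ℂ) = (t : ℂ)) :
    let A : Matrix (Fin n) (Fin n) ℂ :=
      Matrix.of (fun i j => w₁ i * w₁ j) + Matrix.of (fun i j => w₂ i * w₂ j)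
    (Aᴴ * A).charpoly =
      (X - C (((1 + |t|) ^ 2 : ℝ) : ℂ)) * (X - C (((1 - |t|) ^ 2 : ℝ) : ℂ)) * X ^ (n - 2) := by
  intro A
  let W : Matrix (Fin n) (Fin 2) ℂ := of fun i k => ![w₁, w₂] k i
  have hA : A = W * Wᵀ := by
    ext i j
    simp [A, W, mul_apply, Fin.sum_univ_two]
  have hgram : Wᴴ * W = !![1, (t : ℂ); (t : ℂ), 1] := by
    refine Eq.trans ?_ (gram_pair_of_norm_eq_one h1 h2 ht)
    rw [gram_eq_conjTranspose_mul (EuclideanSpace.basisFun (Fin n) ℂ)]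
    simp [W, EuclideanSpace.basisFun_repr]
  have hsq : (Wᴴ * W)ᵀ * (Wᴴ * W) =
      !![1 + (t : ℂ) ^ 2, 2 * (t : ℂ); 2 * (t : ℂ), 1 + (t : ℂ) ^ 2] := by
    rw [hgram]
    ext i j
    fin_cases i <;> fin_cases j <;> simp [mul_apply] <;> ring
  rw [hA, charpoly_conjTranspose_mul_self_of_mul_transpose W (by simpa using hn), hsq,
    charpoly_of_fin_two_circulant, Fintype.card_fin, Fintype.card_fin]
  rcases abs_cases t with ⟨habs, _⟩ | ⟨habs, _⟩ <;> rw [habs] <;> push_cast <;> ring_nf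
end

section
/- Let M ≥ 1, let x, z ∈ ℝ^M with z ≠ x, let v ∈ ℝ^M be a unit vector, let β > 0, and let ε be a real number with 0 ≤ ε < (√2 − 1)·|z − x|. Write d := |z − x| and cos θ := ⟨z − x, v⟩ / d (Euclidean inner product and norm). Then the doubly indexed family a(r, s) := (−1)^r · (Γ(β/2 + r) / (Γ(β/2) · s! · (r − s)!)) · 2^{r−s} · ε^{r+s} · (cos θ)^{r−s} · d^{−β − r − s}, defined for integers 0 ≤ s ≤ r, is absolutely summable, and its sum equals |z + εv − x|^{−β}. -/
/-!
With `d = ‖z - x‖` and `c = ⟪z - x, v⟫`, one has `‖z + ε v - x‖ ^ (-β) = d ^ (-β) (1 + u) ^ (-β/2)`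
where `u = ε² / d² + 2 ε c / d²`. Expanding `(1 + u) ^ (-β/2)` by the binomial series and then each
`u ^ r` by the finite binomial theorem produces the double series, whose coefficients are rewritten
through `Ring.choose (-b) r = (-1) ^ r Γ(b + r) / (Γ(b) r!)`. Absolute convergence holds because
`ε² / d² + 2 ε |c| / d² < 1`: as `|c| ≤ d`, this follows from `(ε + d)² < 2 d²`, i.e. from
`ε < (√2 - 1) d`.
-/

open Finset

namespace Real

theorem hasSum_choose_mul_pow (a : ℝ) {y : ℝ} (hy : |y| < 1) :
    HasSum (fun n ↦ Ring.choose a n * y ^ n) ((1 + y) ^ a) := by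
  have h := one_add_rpow_hasFPowerSeriesOnBall_zero (a := a) |>.hasSum (y := y)
    (by simpa [edist_dist] using hy)
  simpa [binomialSeries, FormalMultilinearSeries.ofScalars_apply_eq, mul_comm] using h

theorem summable_abs_choose_mul_pow (a : ℝ) {w : ℝ} (hw₀ : 0 ≤ w) (hw : w < 1) :
    Summable (fun n ↦ |Ring.choose a n| * w ^ n) := by
  lift w to NNReal using hw₀
  have := (binomialSeries ℝ a).summable_norm_mul_pow
    (lt_of_lt_of_le (by exact_mod_cast hw) binomialSeries_radius_ge_one)
  simpa [binomialSeries, FormalMultilinearSeries.ofScalars_norm] using this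

theorem Gamma_add_nat_eq_mul_ascPochhammer {b : ℝ} (hb : ∀ k : ℕ, b ≠ -k) (n : ℕ) :
    Gamma (b + n) = Gamma b * (ascPochhammer ℝ n).eval b := by
  induction n with
  | zero => simp
  | succ n ih =>
    have hbn : b + n ≠ 0 := fun h ↦ hb n (by linarith)
    rw [Nat.cast_succ, ← add_assoc, Gamma_add_one hbn, ih, ascPochhammer_succ_right]
    simp only [Polynomial.eval_mul, Polynomial.eval_add, Polynomial.eval_X,
      Polynomial.eval_natCast]
    ring

theorem choose_neg_eq_Gamma {b : ℝ} (hb : ∀ k : ℕ, b ≠ -k) (n : ℕ) :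
    Ring.choose (-b) n = (-1) ^ n * Gamma (b + n) / (Gamma b * n.factorial) := by
  have hfac := Ring.factorial_nsmul_multichoose_eq_ascPochhammer b n
  rw [Polynomial.ascPochhammer_smeval_eq_eval, nsmul_eq_mul] at hfac
  rw [Ring.choose_neg', Units.smul_def, Int.coe_negOnePow_natCast, zsmul_eq_mul,
    Gamma_add_nat_eq_mul_ascPochhammer hb, ← hfac]
  field_simp [Gamma_ne_zero hb]
  push_cast
  ring

end Real

theorem hasSum_ite_le_choose_mul_pow_mul_pow (c x y : ℝ) (r : ℕ) :
    HasSum (fun s ↦ if s ≤ r then c * r.choose s * x ^ s * y ^ (r - s) else 0)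
      (c * (x + y) ^ r) := by
  have hsupp : ∀ s ∉ range (r + 1),
      (if s ≤ r then c * r.choose s * x ^ s * y ^ (r - s) else 0) = 0 := fun s hs ↦
    if_neg (by simpa [Nat.lt_succ_iff] using hs)
  convert (hasSum_sum_of_ne_finset_zero hsupp : HasSum _ _) using 1
  rw [add_pow, mul_sum]
  refine sum_congr rfl fun s hs ↦ ?_
  rw [if_pos (Nat.lt_succ_iff.1 (mem_range.1 hs))]
  ring

theorem summable_abs_and_hasSum_of_binomial_split {a : ℕ × ℕ → ℝ} {c : ℕ → ℝ} {x y S : ℝ}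
    (ha : ∀ p : ℕ × ℕ, p.2 ≤ p.1 → a p = c p.1 * p.1.choose p.2 * x ^ p.2 * y ^ (p.1 - p.2))
    (hS : HasSum (fun r ↦ c r * (x + y) ^ r) S)
    (habs : Summable fun r ↦ |c r| * (|x| + |y|) ^ r) :
    Summable (fun p : ℕ × ℕ ↦ |if p.2 ≤ p.1 then a p else 0|) ∧
      HasSum (fun p : ℕ × ℕ ↦ if p.2 ≤ p.1 then a p else 0) S := by
  have hrow (r : ℕ) : HasSum (fun s ↦ if s ≤ r then a (r, s) else 0) (c r * (x + y) ^ r) := by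
    convert hasSum_ite_le_choose_mul_pow_mul_pow (c r) x y r using 2 with s
    split_ifs with h
    exacts [ha (r, s) h, rfl]
  have hrow_abs (r : ℕ) :
      HasSum (fun s ↦ |if s ≤ r then a (r, s) else 0|) (|c r| * (|x| + |y|) ^ r) := by
    convert hasSum_ite_le_choose_mul_pow_mul_pow |c r| |x| |y| r using 2 with s
    split_ifs with h
    · simp [ha (r, s) h, abs_mul, abs_pow]
    · exact abs_zero
  have hsum_abs : Summable (fun p : ℕ × ℕ ↦ |if p.2 ≤ p.1 then a p else 0|) :=
    (summable_prod_of_nonneg fun _ ↦ abs_nonneg _).2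
      ⟨fun r ↦ (hrow_abs r).summable, habs.congr fun r ↦ (hrow_abs r).tsum_eq.symm⟩
  have hT := hsum_abs.of_abs.hasSum
  refine ⟨hsum_abs, ?_⟩
  rwa [(hT.prod_fiberwise hrow).unique hS] at hT

theorem Gamma_term_eq_choose_mul_pow {β d : ℝ} (hβ : ∀ k : ℕ, β / 2 ≠ -k) (hd : 0 < d)
    (ε c : ℝ) {r s : ℕ} (hsr : s ≤ r) :
    (-1 : ℝ) ^ r * (Real.Gamma (β / 2 + (r : ℝ)) /
        (Real.Gamma (β / 2) * (s.factorial : ℝ) * ((r - s).factorial : ℝ))) *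
      (2 : ℝ) ^ (r - s) * ε ^ (r + s) * (c / d) ^ (r - s) * d ^ (-β - (r : ℝ) - (s : ℝ)) =
    d ^ (-β) * Ring.choose (-(β / 2)) r * r.choose s *
      (ε ^ 2 / d ^ 2) ^ s * (2 * ε * c / d ^ 2) ^ (r - s) := by
  obtain ⟨k, rfl⟩ := Nat.exists_eq_add_of_le hsr
  have hexp : -β - ((s + k : ℕ) : ℝ) - s = -β - ((2 * s + k : ℕ) : ℝ) := by push_cast; ring
  rw [Real.choose_neg_eq_Gamma hβ, Nat.cast_choose ℝ hsr, Nat.add_sub_cancel_left, hexp,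
    Real.rpow_sub hd, Real.rpow_natCast]
  simp only [div_pow]
  field_simp [Real.Gamma_ne_zero hβ, hd.ne']
  ring

theorem norm_add_smul_rpow_neg {E : Type*} [NormedAddCommGroup E] [InnerProductSpace ℝ E]
    {w v : E} (hw : w ≠ 0) (hv : ‖v‖ = 1) (ε β : ℝ) :
    ‖w + ε • v‖ ^ (-β) =
      ‖w‖ ^ (-β) * (1 + (ε ^ 2 / ‖w‖ ^ 2 + 2 * ε * inner ℝ w v / ‖w‖ ^ 2)) ^ (-(β / 2)) := by
  have hw' : 0 < ‖w‖ := norm_pos_iff.2 hw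
  have hsq : ‖w + ε • v‖ ^ 2 =
      ‖w‖ ^ 2 * (1 + (ε ^ 2 / ‖w‖ ^ 2 + 2 * ε * inner ℝ w v / ‖w‖ ^ 2)) := by
    rw [norm_add_sq_real, real_inner_smul_right, norm_smul, hv, Real.norm_eq_abs, mul_one, sq_abs]
    field_simp
    ring
  have hnonneg : 0 ≤ 1 + (ε ^ 2 / ‖w‖ ^ 2 + 2 * ε * inner ℝ w v / ‖w‖ ^ 2) :=
    nonneg_of_mul_nonneg_right (hsq ▸ sq_nonneg _) (by positivity)
  have hsq_rpow (t : ℝ) (ht : 0 ≤ t) : t ^ (-β) = (t ^ 2) ^ (-(β / 2)) := by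
    rw [← Real.rpow_natCast_mul ht]
    ring_nf
  rw [hsq_rpow _ (norm_nonneg _), hsq, Real.mul_rpow (by positivity) hnonneg,
    ← hsq_rpow _ (norm_nonneg _)]

theorem sq_add_two_mul_lt_sq {ε d : ℝ} (hε₀ : 0 ≤ ε) (hε : ε < (√2 - 1) * d) :
    ε ^ 2 + 2 * ε * d < d ^ 2 := by
  have hsum : ε + d < √2 * d := by linarith
  have hd : 0 ≤ d := by nlinarith [Real.sqrt_nonneg 2, Real.sq_sqrt (zero_le_two (α := ℝ))]
  have := pow_lt_pow_left₀ hsum (by positivity) two_ne_zero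
  rw [mul_pow, Real.sq_sqrt zero_le_two] at this
  linarith

theorem binomial_expansion_of_shifted_distance_general (M : ℕ)
    (x z : EuclideanSpace ℝ (Fin M)) (hzx : z ≠ x)
    (v : EuclideanSpace ℝ (Fin M)) (hv : ‖v‖ = 1)
    (β : ℝ) (hβ : 0 < β)
    (ε : ℝ) (hε0 : 0 ≤ ε) (hε : ε < (Real.sqrt 2 - 1) * ‖z - x‖) :
    Summable (fun p : ℕ × ℕ =>
      |if p.2 ≤ p.1 then
          (-1 : ℝ) ^ p.1 *
            (Real.Gamma (β / 2 + (p.1 : ℝ)) /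
              (Real.Gamma (β / 2) * (p.2.factorial : ℝ) * ((p.1 - p.2).factorial : ℝ))) *
          (2 : ℝ) ^ (p.1 - p.2) * ε ^ (p.1 + p.2) *
          ((inner ℝ (z - x) v : ℝ) / ‖z - x‖) ^ (p.1 - p.2) *
          ‖z - x‖ ^ (-β - (p.1 : ℝ) - (p.2 : ℝ))
        else 0|) ∧
    HasSum (fun p : ℕ × ℕ =>
      if p.2 ≤ p.1 then
          (-1 : ℝ) ^ p.1 *
            (Real.Gamma (β / 2 + (p.1 : ℝ)) /
              (Real.Gamma (β / 2) * (p.2.factorial : ℝ) * ((p.1 - p.2).factorial : ℝ))) *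
          (2 : ℝ) ^ (p.1 - p.2) * ε ^ (p.1 + p.2) *
          ((inner ℝ (z - x) v : ℝ) / ‖z - x‖) ^ (p.1 - p.2) *
          ‖z - x‖ ^ (-β - (p.1 : ℝ) - (p.2 : ℝ))
        else 0)
      (‖z + ε • v - x‖ ^ (-β)) := by
  have hd : 0 < ‖z - x‖ := norm_pos_iff.2 (sub_ne_zero_of_ne hzx)
  set d := ‖z - x‖
  set c : ℝ := inner ℝ (z - x) v
  have hcd : |c| ≤ d := by simpa [hv] using abs_real_inner_le_norm (z - x) v
  have hsmall : |ε ^ 2 / d ^ 2| + |2 * ε * c / d ^ 2| < 1 := by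
    rw [abs_div, abs_div, abs_mul, abs_of_nonneg (sq_nonneg _), abs_of_nonneg (by positivity),
      abs_of_nonneg (by positivity), ← add_div, div_lt_one (by positivity)]
    nlinarith [sq_add_two_mul_lt_sq hε0 hε, mul_le_mul_of_nonneg_left hcd hε0]
  have hβ' : ∀ k : ℕ, β / 2 ≠ -k := fun k h ↦ by linarith [(k.cast_nonneg : (0 : ℝ) ≤ k)]
  refine summable_abs_and_hasSum_of_binomial_split
    (c := fun r ↦ d ^ (-β) * Ring.choose (-(β / 2)) r) (x := ε ^ 2 / d ^ 2)
    (y := 2 * ε * c / d ^ 2) (fun p hp ↦ Gamma_term_eq_choose_mul_pow hβ' hd ε c hp) ?_ ?_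
  · rw [add_sub_right_comm, norm_add_smul_rpow_neg (sub_ne_zero_of_ne hzx) hv]
    simpa only [mul_assoc] using
      (Real.hasSum_choose_mul_pow _ ((abs_add_le _ _).trans_lt hsmall)).mul_left (d ^ (-β))
  · simpa [abs_mul, mul_assoc, abs_of_pos (Real.rpow_pos_of_pos hd _)] using
      (Real.summable_abs_choose_mul_pow (-(β / 2)) (by positivity) hsmall).mul_left (d ^ (-β))

/-- Generalized binomial series expansion of `|z + εv − x|^{−β}`: for a unit vector `v`,
`β > 0` and `0 ≤ ε < (√2 − 1)|z − x|`, the doubly indexed family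
`a(r,s) = (−1)^r (Γ(β/2 + r)/(Γ(β/2) s! (r−s)!)) 2^{r−s} ε^{r+s} (cos θ)^{r−s} d^{−β−r−s}`
(for `0 ≤ s ≤ r`, where `d = |z − x|` and `cos θ = ⟨z − x, v⟩/d`) is absolutely summable
with sum `|z + εv − x|^{−β}`. -/
theorem binomial_expansion_of_shifted_distance (M : ℕ) (hM : 1 ≤ M)
    (x z : EuclideanSpace ℝ (Fin M)) (hzx : z ≠ x)
    (v : EuclideanSpace ℝ (Fin M)) (hv : ‖v‖ = 1)
    (β : ℝ) (hβ : 0 < β)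
    (ε : ℝ) (hε0 : 0 ≤ ε) (hε : ε < (Real.sqrt 2 - 1) * ‖z - x‖) :
    Summable (fun p : ℕ × ℕ =>
      |if p.2 ≤ p.1 then
          (-1 : ℝ) ^ p.1 *
            (Real.Gamma (β / 2 + (p.1 : ℝ)) /
              (Real.Gamma (β / 2) * (p.2.factorial : ℝ) * ((p.1 - p.2).factorial : ℝ))) *
          (2 : ℝ) ^ (p.1 - p.2) * ε ^ (p.1 + p.2) *
          ((inner ℝ (z - x) v : ℝ) / ‖z - x‖) ^ (p.1 - p.2) *
          ‖z - x‖ ^ (-β - (p.1 : ℝ) - (p.2 : ℝ))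
        else 0|) ∧
    HasSum (fun p : ℕ × ℕ =>
      if p.2 ≤ p.1 then
          (-1 : ℝ) ^ p.1 *
            (Real.Gamma (β / 2 + (p.1 : ℝ)) /
              (Real.Gamma (β / 2) * (p.2.factorial : ℝ) * ((p.1 - p.2).factorial : ℝ))) *
          (2 : ℝ) ^ (p.1 - p.2) * ε ^ (p.1 + p.2) *
          ((inner ℝ (z - x) v : ℝ) / ‖z - x‖) ^ (p.1 - p.2) *
          ‖z - x‖ ^ (-β - (p.1 : ℝ) - (p.2 : ℝ))
        else 0)
      (‖z + ε • v - x‖ ^ (-β)) :=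
  binomial_expansion_of_shifted_distance_general M x z hzx v hv β hβ ε hε0 hε
end
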